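/- Suppose p is non-negative and integrable on [a,b] with ∫_a^b p(t) dt > 0, and n ∈ ℕ is odd. Then there exists x ∈ [a,b] with ∫_a^b r_x^n(t) dt = 0; moreover, if p is positive almost everywhere on [a,b], then this x is unique. -/

import Mathlib

open MeasureTheory intervalIntegral

/-- The kernels `r_x^k`: `r_x^0 = p` and
`r_x^{k+1}(s) = −∫_a^s r_x^k` for `s ≤ x`, `∫_s^b r_x^k` for `s ≥ x`. -/
noncomputable def rk (a b x : ℝ) (p : ℝ → ℝ) : ℕ → ℝ → ℝ
  | 0 => p
  | k + 1 => fun s =>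
      if s ≤ x then -(∫ t in a..s, rk a b x p k t)
      else ∫ t in s..b, rk a b x p k t

/-! Writing `Lₖ` and `Rₖ` for the iterated primitives `s ↦ ∫_a^s` and `s ↦ ∫_s^b` of `p`, the
kernel `r_x^n` is `(-1)ⁿ Lₙ` left of `x` and `Rₙ` right of `x`, so for odd `n` its integral is
`F x = ∫_x^b Rₙ - ∫_a^x Lₙ`. Both primitives are nonnegative, hence the continuous function `F`
satisfies `F b ≤ 0 ≤ F a` and has a zero in `[a, b]`. If `p > 0` a.e., then `Lₙ > 0` a.e. on
`(a, b]` and `F` is strictly decreasing on `[a, b]`. -/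

noncomputable def leftIterPrimitive (a : ℝ) (q : ℝ → ℝ) : ℕ → ℝ → ℝ
  | 0 => q
  | k + 1 => fun s => ∫ t in a..s, leftIterPrimitive a q k t

noncomputable def rightIterPrimitive (b : ℝ) (q : ℝ → ℝ) : ℕ → ℝ → ℝ
  | 0 => q
  | k + 1 => fun s => ∫ t in s..b, rightIterPrimitive b q k t

theorem continuous_integral_left_endpoint {f : ℝ → ℝ}
    (hf : ∀ c d, IntervalIntegrable f volume c d) (b : ℝ) :
    Continuous fun s => ∫ t in s..b, f t := by
  simp only [integral_symm b]
  exact (continuous_primitive hf b).neg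

theorem intervalIntegral_pos_of_ae_pos {f : ℝ → ℝ} {c d : ℝ} (hcd : c < d)
    (hf : IntervalIntegrable f volume c d) (hpos : ∀ᵐ t ∂volume.restrict (Set.Ioc c d), 0 < f t) :
    0 < ∫ t in c..d, f t := by
  have hsupp : volume.restrict (Set.Ioc c d) (Function.support f) =
      volume.restrict (Set.Ioc c d) Set.univ :=
    measure_congr (ae_eq_univ.2 (hpos.mono fun _ h => h.ne'))
  rw [integral_of_le hcd.le,
    setIntegral_pos_iff_support_of_nonneg_ae (hpos.mono fun _ h => h.le) hf.1,
    ← Measure.restrict_apply' measurableSet_Ioc, hsupp, Measure.restrict_apply_univ,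
    Real.volume_Ioc, ENNReal.ofReal_pos, sub_pos]
  exact hcd

section IterPrimitive

variable {q : ℝ → ℝ} {a b : ℝ}

theorem leftIterPrimitive_intervalIntegrable (hq : Integrable q) (a : ℝ) :
    ∀ k c d, IntervalIntegrable (leftIterPrimitive a q k) volume c d
  | 0, _, _ => hq.intervalIntegrable
  | k + 1, c, d =>
    (continuous_primitive (leftIterPrimitive_intervalIntegrable hq a k) a).intervalIntegrable c d

theorem rightIterPrimitive_intervalIntegrable (hq : Integrable q) (b : ℝ) :
    ∀ k c d, IntervalIntegrable (rightIterPrimitive b q k) volume c d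
  | 0, _, _ => hq.intervalIntegrable
  | k + 1, c, d =>
    (continuous_integral_left_endpoint (rightIterPrimitive_intervalIntegrable hq b k)
      b).intervalIntegrable c d

theorem leftIterPrimitive_nonneg (hq0 : ∀ t, 0 ≤ q t) :
    ∀ k s, a ≤ s → 0 ≤ leftIterPrimitive a q k s
  | 0, s, _ => hq0 s
  | k + 1, _, has => integral_nonneg has fun t ht => leftIterPrimitive_nonneg hq0 k t ht.1

theorem rightIterPrimitive_nonneg (hq0 : ∀ t, 0 ≤ q t) :
    ∀ k s, s ≤ b → 0 ≤ rightIterPrimitive b q k s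
  | 0, s, _ => hq0 s
  | k + 1, _, hsb => integral_nonneg hsb fun t ht => rightIterPrimitive_nonneg hq0 k t ht.2

theorem leftIterPrimitive_ae_pos (hq : Integrable q)
    (hpos : ∀ᵐ t ∂volume.restrict (Set.Ioc a b), 0 < q t) :
    ∀ k, ∀ᵐ s ∂volume.restrict (Set.Ioc a b), 0 < leftIterPrimitive a q k s
  | 0 => hpos
  | k + 1 => by
    refine (ae_restrict_iff' measurableSet_Ioc).2 (Filter.Eventually.of_forall fun s hs => ?_)
    exact intervalIntegral_pos_of_ae_pos hs.1 (leftIterPrimitive_intervalIntegrable hq a k a s)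
      (ae_restrict_of_ae_restrict_of_subset (Set.Ioc_subset_Ioc_right hs.2)
        (leftIterPrimitive_ae_pos hq hpos k))

end IterPrimitive

section Kernel

variable {a b x : ℝ} {q : ℝ → ℝ}

theorem rk_eqOn_Icc {p : ℝ → ℝ} (hpq : Set.EqOn p q (Set.Icc a b)) :
    ∀ k, Set.EqOn (rk a b x p k) (rk a b x q k) (Set.Icc a b)
  | 0 => hpq
  | k + 1 => fun s hs => by
    have ha : a ∈ Set.Icc a b := ⟨le_rfl, hs.1.trans hs.2⟩
    have hb : b ∈ Set.Icc a b := ⟨hs.1.trans hs.2, le_rfl⟩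
    simp only [rk]
    split_ifs
    · exact congrArg _ (integral_congr ((rk_eqOn_Icc hpq k).mono (Set.uIcc_subset_Icc ha hs)))
    · exact integral_congr ((rk_eqOn_Icc hpq k).mono (Set.uIcc_subset_Icc hs hb))

theorem rk_eq_leftIterPrimitive (hax : a ≤ x) :
    ∀ k s, s ≤ x → rk a b x q k s = (-1) ^ k * leftIterPrimitive a q k s
  | 0, _, _ => (one_mul _).symm
  | k + 1, s, hsx => by
    have h : ∀ t ∈ Set.uIcc a s, rk a b x q k t = (-1) ^ k * leftIterPrimitive a q k t :=
      fun t ht => rk_eq_leftIterPrimitive hax k t (ht.2.trans (max_le hax hsx))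
    simp only [rk, if_pos hsx, leftIterPrimitive, integral_congr h,
      intervalIntegral.integral_const_mul, pow_succ]
    ring

theorem rk_eq_rightIterPrimitive (hxb : x ≤ b) :
    ∀ k s, x < s → s ≤ b → rk a b x q k s = rightIterPrimitive b q k s
  | 0, _, _, _ => rfl
  | k + 1, s, hxs, hsb => by
    have h : ∀ t ∈ Set.uIcc s b, rk a b x q k t = rightIterPrimitive b q k t := by
      rw [Set.uIcc_of_le hsb]
      exact fun t ht => rk_eq_rightIterPrimitive hxb k t (hxs.trans_le ht.1) ht.2
    simp only [rk, if_neg hxs.not_ge, rightIterPrimitive, integral_congr h]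

theorem integral_rk_eq (hq : Integrable q) (hx : x ∈ Set.Icc a b) (k : ℕ) :
    ∫ t in a..b, rk a b x q k t =
      (-1) ^ k * (∫ t in a..x, leftIterPrimitive a q k t) +
        ∫ t in x..b, rightIterPrimitive b q k t := by
  have hL :
      Set.EqOn (rk a b x q k) (fun t => (-1) ^ k * leftIterPrimitive a q k t) (Set.uIoc a x) := by
    rw [Set.uIoc_of_le hx.1]
    exact fun t ht => rk_eq_leftIterPrimitive hx.1 k t ht.2
  have hR : Set.EqOn (rk a b x q k) (rightIterPrimitive b q k) (Set.uIoc x b) := by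
    rw [Set.uIoc_of_le hx.2]
    exact fun t ht => rk_eq_rightIterPrimitive hx.2 k t ht.1 ht.2
  have hLi := (leftIterPrimitive_intervalIntegrable hq a k a x).const_mul ((-1) ^ k)
  have hRi := rightIterPrimitive_intervalIntegrable hq b k x b
  rw [← integral_add_adjacent_intervals ((intervalIntegrable_congr hL).2 hLi)
      ((intervalIntegrable_congr hR).2 hRi), integral_congr_ae (ae_of_all _ fun t ht => hL ht),
    integral_congr_ae (ae_of_all _ fun t ht => hR ht), intervalIntegral.integral_const_mul]

end Kernel

noncomputable def kernelIntegral (a b : ℝ) (q : ℝ → ℝ) (n : ℕ) (x : ℝ) : ℝ :=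
  (∫ t in x..b, rightIterPrimitive b q n t) - ∫ t in a..x, leftIterPrimitive a q n t

section KernelIntegral

variable {a b x : ℝ} {q : ℝ → ℝ} {n : ℕ}

theorem integral_rk_eq_kernelIntegral (hq : Integrable q) (hn : Odd n) (hx : x ∈ Set.Icc a b) :
    ∫ t in a..b, rk a b x q n t = kernelIntegral a b q n x := by
  rw [integral_rk_eq hq hx, hn.neg_one_pow, kernelIntegral]
  ring

theorem continuous_kernelIntegral (hq : Integrable q) (a b : ℝ) (n : ℕ) :
    Continuous (kernelIntegral a b q n) :=
  (continuous_integral_left_endpoint (rightIterPrimitive_intervalIntegrable hq b n) b).sub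
    (continuous_primitive (leftIterPrimitive_intervalIntegrable hq a n) a)

theorem kernelIntegral_left_nonneg (hab : a ≤ b) (hq0 : ∀ t, 0 ≤ q t) :
    0 ≤ kernelIntegral a b q n a := by
  rw [kernelIntegral, integral_same, sub_zero]
  exact integral_nonneg hab fun t ht => rightIterPrimitive_nonneg hq0 n t ht.2

theorem kernelIntegral_right_nonpos (hab : a ≤ b) (hq0 : ∀ t, 0 ≤ q t) :
    kernelIntegral a b q n b ≤ 0 := by
  rw [kernelIntegral, integral_same, zero_sub, neg_nonpos]
  exact integral_nonneg hab fun t ht => leftIterPrimitive_nonneg hq0 n t ht.1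

theorem kernelIntegral_strictAntiOn (hq : Integrable q) (hq0 : ∀ t, 0 ≤ q t)
    (hpos : ∀ᵐ t ∂volume.restrict (Set.Ioc a b), 0 < q t) (n : ℕ) :
    StrictAntiOn (kernelIntegral a b q n) (Set.Icc a b) := by
  intro x hx y hy hxy
  have hL := leftIterPrimitive_intervalIntegrable hq a n
  have hR := rightIterPrimitive_intervalIntegrable hq b n
  have hR_nonneg : 0 ≤ ∫ t in x..y, rightIterPrimitive b q n t :=
    integral_nonneg hxy.le fun t ht => rightIterPrimitive_nonneg hq0 n t (ht.2.trans hy.2)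
  have hL_pos : 0 < ∫ t in x..y, leftIterPrimitive a q n t :=
    intervalIntegral_pos_of_ae_pos hxy (hL x y) (ae_restrict_of_ae_restrict_of_subset
      (Set.Ioc_subset_Ioc hx.1 hy.2) (leftIterPrimitive_ae_pos hq hpos n))
  rw [kernelIntegral, kernelIntegral, ← integral_add_adjacent_intervals (hL a x) (hL x y),
    ← integral_add_adjacent_intervals (hR x y) (hR y b)]
  linarith

end KernelIntegral

theorem stmt12_general (a b : ℝ) (hab : a < b) (n : ℕ) (hno : Odd n)
    (p : ℝ → ℝ) (hp : IntervalIntegrable p volume a b)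
    (hp0 : ∀ t ∈ Set.Icc a b, 0 ≤ p t) :
    (∃ x ∈ Set.Icc a b, (∫ t in a..b, rk a b x p n t) = 0) ∧
    ((∀ᵐ t ∂(volume.restrict (Set.Icc a b)), 0 < p t) →
      ∃! x : ℝ, x ∈ Set.Icc a b ∧ (∫ t in a..b, rk a b x p n t) = 0) := by
  -- extending `p` by zero makes all iterated primitives integrable over every interval
  set q := (Set.Icc a b).indicator p
  have hq : Integrable q :=
    (integrable_indicator_iff measurableSet_Icc).2 ((integrableOn_Icc_iff_integrableOn_Ioc).2 hp.1)
  have hq0 : ∀ t, 0 ≤ q t := Set.indicator_nonneg hp0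
  have hpq : Set.EqOn p q (Set.Icc a b) := fun t ht => (Set.indicator_of_mem ht p).symm
  have hkey : ∀ x ∈ Set.Icc a b, ∫ t in a..b, rk a b x p n t = kernelIntegral a b q n x :=
    fun x hx => by
      rw [integral_congr ((rk_eqOn_Icc hpq n).mono (Set.uIcc_subset_Icc
        (Set.left_mem_Icc.2 hab.le) (Set.right_mem_Icc.2 hab.le))),
        integral_rk_eq_kernelIntegral hq hno hx]
  obtain ⟨x, hx, hx0⟩ :=
    intermediate_value_Icc' hab.le (continuous_kernelIntegral hq a b n).continuousOn
      ⟨kernelIntegral_right_nonpos hab.le hq0, kernelIntegral_left_nonneg hab.le hq0⟩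
  refine ⟨⟨x, hx, (hkey x hx).trans hx0⟩, fun hpos => ⟨x, ⟨hx, (hkey x hx).trans hx0⟩, ?_⟩⟩
  rintro y ⟨hy, hy0⟩
  have hqpos : ∀ᵐ t ∂volume.restrict (Set.Ioc a b), 0 < q t := by
    refine ae_restrict_of_ae_restrict_of_subset Set.Ioc_subset_Icc_self ?_
    filter_upwards [hpos, ae_restrict_mem measurableSet_Icc] with t ht htI
    rwa [← hpq htI]
  exact (kernelIntegral_strictAntiOn hq hq0 hqpos n).injOn hy hx
    (by rw [← hkey y hy, hy0, hx0])

/-- If `p ≥ 0` is integrable on `[a,b]` with `∫_a^b p > 0` and `n` is odd, then there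
exists `x ∈ [a,b]` with `∫_a^b r_x^n(t) dt = 0`; if moreover `p > 0` almost everywhere
on `[a,b]`, then this `x` is unique. -/
theorem stmt12 (a b : ℝ) (hab : a < b) (n : ℕ) (hno : Odd n)
    (p : ℝ → ℝ) (hp : IntervalIntegrable p volume a b)
    (hp0 : ∀ t ∈ Set.Icc a b, 0 ≤ p t)
    (hppos : 0 < ∫ t in a..b, p t) :
    (∃ x ∈ Set.Icc a b, (∫ t in a..b, rk a b x p n t) = 0) ∧
    ((∀ᵐ t ∂(volume.restrict (Set.Icc a b)), 0 < p t) →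
      ∃! x : ℝ, x ∈ Set.Icc a b ∧ (∫ t in a..b, rk a b x p n t) = 0) :=
  stmt12_general a b hab n hno p hp hp0
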